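/- arXiv:2110.02675 — 6 statements merged into one kernel-verified Lean document; each statement's English description precedes it below -/
import Mathlib

section
/- Let F_q be a finite field with q ≡ 1 (mod 3), ψ a nontrivial additive character, χ a multiplicative character of order 3 with conjugate χ̄, and let a₁,a₂,a₃ ∈ F_q*. Then the number M of solutions (x₁,x₂,x₃) ∈ F_q³ of a₁x₁³ + a₂x₂³ + a₃x₃³ = 0 equals q² + ((q−1)/q)·(χ̄(a₁a₂a₃)·G(χ,ψ)³ + χ(a₁a₂a₃)·G(χ̄,ψ)³). -/
/-!
Orthogonality of `ψ` gives `q · M = ∑ₜ ∑ₓ ψ(t (a₁x₁³ + a₂x₂³ + a₃x₃³))`, and the inner sum factors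
as `S(ta₁) S(ta₂) S(ta₃)` with `S(c) = ∑ₓ ψ(c x³)`. Since `u` has exactly `1 + χ(u) + χ̄(u)` cube
roots, `S(c) = χ̄(c) G(χ, ψ) + χ(c) G(χ̄, ψ)` for `c ≠ 0`. For `t ≠ 0` the product is thus a
polynomial in `χ(t)`, and summing over `t` kills every power of `χ(t)` not divisible by 3; what
survives is `(q - 1)(χ̄(a₁a₂a₃) G(χ, ψ)³ + χ(a₁a₂a₃) G(χ̄, ψ)³)`, while `t = 0` contributes `q³`.
-/

open Finset Polynomial

section

variable {F : Type*} [Field F] [Fintype F]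

theorem FiniteField.exists_isPrimitiveRoot_of_dvd_card_sub_one {n : ℕ}
    (hn : n ∣ Fintype.card F - 1) : ∃ ζ : F, IsPrimitiveRoot ζ n := by
  classical
  obtain ⟨g, hg⟩ := IsCyclic.exists_ofOrder_eq_natCard (α := Fˣ)
  rw [Nat.card_eq_fintype_card, Fintype.card_units] at hg
  obtain ⟨d, hd⟩ := hn
  have hd0 : d ≠ 0 := by
    rintro rfl
    have := Fintype.one_lt_card (α := F)
    omega
  have := (IsPrimitiveRoot.orderOf g).pow_of_dvd hd0 (hg ▸ hd ▸ dvd_mul_left d n)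
  rw [hg, hd, Nat.mul_div_cancel _ (Nat.pos_of_ne_zero hd0)] at this
  exact ⟨_, IsPrimitiveRoot.coe_units_iff.mpr this⟩

theorem Finset.sum_comp_pow_eq_sum_card_nthRootsFinset_mul {M : Type*} [AddCommMonoid M]
    {n : ℕ} (hn : 0 < n) (f : F → M) :
    ∑ x : F, f (x ^ n) = ∑ u : F, (nthRootsFinset n u).card • f u := by
  classical
  rw [← sum_fiberwise' (univ : Finset F) (· ^ n) f]
  refine sum_congr rfl fun u _ => ?_
  have hfiber : {x ∈ (univ : Finset F) | x ^ n = u} = nthRootsFinset n u := by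
    ext x
    simp [mem_nthRootsFinset hn]
  rw [sum_const, hfiber]

namespace AddChar

theorem sum_prod_add {α β A R : Type*} [Fintype α] [Fintype β] [AddMonoid A] [CommSemiring R]
    (ψ : AddChar A R) (f : α → A) (g : β → A) :
    ∑ x : α × β, ψ (f x.1 + g x.2) = (∑ a, ψ (f a)) * ∑ b, ψ (g b) := by
  simp_rw [map_add_eq_mul, Fintype.sum_prod_type, sum_mul_sum]

variable {R : Type*} [CommRing R] [IsDomain R]

theorem card_mul_card_eq_sum_sum [DecidableEq F] {V : Type*} [Fintype V] {ψ : AddChar F R}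
    (hψ : ψ.IsPrimitive) (f : V → F) :
    (Fintype.card F : R) * Fintype.card {x // f x = 0} = ∑ t, ∑ x, ψ (t * f x) := by
  rw [sum_comm, sum_congr rfl fun x _ => sum_mulShift (f x) hψ]
  push_cast [apply_ite]
  rw [sum_ite, sum_const_zero, add_zero, sum_const, nsmul_eq_mul, Fintype.card_subtype, mul_comm]

end AddChar

namespace MulChar

variable {R : Type*} [CommRing R]

theorem exists_pow_orderOf_eq_of_apply_eq_one (χ : MulChar F R) {u : F} (hu : u ≠ 0)
    (h : χ u = 1) : ∃ v : F, v ^ orderOf χ = u := by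
  obtain ⟨g, hg⟩ := IsCyclic.exists_generator (α := Fˣ)
  obtain ⟨k, hk⟩ : ∃ k : ℕ, g ^ k = Units.mk0 u hu :=
    (Submonoid.mem_powers_iff _ _).mp (mem_powers_iff_mem_zpowers.mpr (hg _))
  have hχk : χ ^ k = 1 := by
    rw [eq_iff hg, pow_apply_coe, one_apply_coe, ← map_pow, ← Units.val_pow_eq_pow_val, hk,
      Units.val_mk0, h]
  obtain ⟨m, rfl⟩ := orderOf_dvd_of_pow_eq_one hχk
  exact ⟨(g ^ m : Fˣ), by rw [← Units.val_pow_eq_pow_val, ← pow_mul, mul_comm, hk, Units.val_mk0]⟩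

variable [IsDomain R]

-- The trivial character is split off as the constant `1` because `(χ ^ 0) 0 = 0`.
theorem card_nthRootsFinset_orderOf (χ : MulChar F R) (u : F) :
    ((nthRootsFinset (orderOf χ) u).card : R) = 1 + ∑ k ∈ Ico 1 (orderOf χ), (χ ^ k) u := by
  classical
  set n := orderOf χ
  have hn : 0 < n := χ.orderOf_pos
  rcases eq_or_ne u 0 with rfl | hu
  · have h0 : nthRootsFinset n (0 : F) = {0} := by
      ext x
      simp [mem_nthRootsFinset hn, hn.ne']
    rw [h0, sum_eq_zero fun k _ => MulChar.map_zero _]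
    simp
  obtain ⟨ζ, hζ⟩ :=
    FiniteField.exists_isPrimitiveRoot_of_dvd_card_sub_one χ.orderOf_dvd_card_sub_one
  have hcard : (nthRootsFinset n u).card = if ∃ v, v ^ n = u then n else 0 := by
    rw [nthRootsFinset_def, Multiset.toFinset_card_of_nodup (hζ.nthRoots_nodup hu),
      hζ.card_nthRoots]
    congr
  have hgeom : 1 + ∑ k ∈ Ico 1 n, (χ ^ k) u = ∑ k ∈ range n, χ u ^ k := by
    rw [range_eq_Ico, sum_eq_sum_Ico_succ_bot hn, pow_zero]
    exact congrArg _ (sum_congr rfl fun k hk => pow_apply' χ (by simp at hk; omega) u)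
  rw [hcard, hgeom]
  split_ifs with hpow
  · obtain ⟨v, rfl⟩ := hpow
    have hv : v ≠ 0 := by rintro rfl; exact hu (zero_pow hn.ne')
    rw [map_pow, ← pow_apply' χ hn.ne', pow_orderOf_eq_one, one_apply hv.isUnit]
    simp
  · have h1 : χ u ≠ 1 := fun h => hpow (χ.exists_pow_orderOf_eq_of_apply_eq_one hu h)
    have hgeom_mul := geom_sum_mul (χ u) n
    rw [← pow_apply' χ hn.ne', pow_orderOf_eq_one, one_apply hu.isUnit, sub_self] at hgeom_mul
    rw [Nat.cast_zero, (mul_eq_zero.mp hgeom_mul).resolve_right (sub_ne_zero.mpr h1)]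

theorem sum_apply_pow (χ : MulChar F R) {k : ℕ} (hk : k ≠ 0) :
    ∑ t, χ t ^ k = if orderOf χ ∣ k then (Fintype.card F : R) - 1 else 0 := by
  classical
  simp_rw [← pow_apply' χ hk]
  split_ifs with h
  · rw [orderOf_dvd_iff_pow_eq_one.mp h, sum_one_eq_card_units, Fintype.card_units,
      Nat.cast_sub Fintype.card_pos, Nat.cast_one]
  · exact sum_eq_zero_of_ne_one (mt orderOf_dvd_iff_pow_eq_one.mpr h)

theorem sum_prod_sq_mul_add_mul_of_orderOf_eq_three (χ : MulChar F R) (hχ : orderOf χ = 3)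
    (A₁ A₂ A₃ B₁ B₂ B₃ : R) :
    ∑ t, (χ t ^ 2 * A₁ + χ t * B₁) * (χ t ^ 2 * A₂ + χ t * B₂) * (χ t ^ 2 * A₃ + χ t * B₃) =
      ((Fintype.card F : R) - 1) * (A₁ * A₂ * A₃ + B₁ * B₂ * B₃) := by
  have hexpand : ∀ z : R,
      (z ^ 2 * A₁ + z * B₁) * (z ^ 2 * A₂ + z * B₂) * (z ^ 2 * A₃ + z * B₃) =
        z ^ 6 * (A₁ * A₂ * A₃) + z ^ 5 * (A₁ * A₂ * B₃ + A₁ * B₂ * A₃ + B₁ * A₂ * A₃) +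
          z ^ 4 * (A₁ * B₂ * B₃ + B₁ * A₂ * B₃ + B₁ * B₂ * A₃) + z ^ 3 * (B₁ * B₂ * B₃) :=
    fun z => by ring
  simp_rw [hexpand, sum_add_distrib, ← sum_mul, χ.sum_apply_pow (Nat.succ_ne_zero _), hχ]
  norm_num
  ring

theorem sum_addChar_mul_pow_orderOf {ψ : AddChar F R} (hψ : ψ.IsPrimitive) (χ : MulChar F R)
    {c : F} (hc : c ≠ 0) :
    ∑ x, ψ (c * x ^ orderOf χ) = ∑ k ∈ Ico 1 (orderOf χ), (χ ^ k)⁻¹ c * gaussSum (χ ^ k) ψ := by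
  classical
  have hψc : ∑ u, ψ (c * u) = 0 := by
    simpa [mul_comm, hc] using AddChar.sum_mulShift c hψ
  have hgauss (k : ℕ) : ∑ u, (χ ^ k) u * ψ (c * u) = (χ ^ k)⁻¹ c * gaussSum (χ ^ k) ψ := by
    simpa [gaussSum] using gaussSum_mulShift_eq (χ ^ k) ψ (Units.mk0 c hc)
  rw [sum_comp_pow_eq_sum_card_nthRootsFinset_mul χ.orderOf_pos (fun u => ψ (c * u))]
  simp_rw [nsmul_eq_mul, card_nthRootsFinset_orderOf, add_mul, one_mul, sum_add_distrib, hψc,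
    zero_add, sum_mul]
  rw [sum_comm]
  exact sum_congr rfl fun k _ => hgauss k

theorem sum_addChar_mul_cube_of_orderOf_eq_three {ψ : AddChar F R} (hψ : ψ.IsPrimitive)
    {χ : MulChar F R} (hχ : orderOf χ = 3) {c : F} (hc : c ≠ 0) :
    ∑ x, ψ (c * x ^ 3) = (χ ^ 2) c * gaussSum χ ψ + χ c * gaussSum (χ ^ 2) ψ := by
  have hχ3 : χ ^ 3 = 1 := hχ ▸ pow_orderOf_eq_one χ
  have hinv₁ : χ⁻¹ = χ ^ 2 := inv_eq_of_mul_eq_one_right (by rw [← pow_succ', hχ3])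
  have hinv₂ : (χ ^ 2)⁻¹ = χ := inv_eq_of_mul_eq_one_right (by rw [← pow_succ, hχ3])
  have hIco : Ico 1 3 = {1, 2} := rfl
  have := sum_addChar_mul_pow_orderOf hψ χ hc
  rwa [hχ, hIco, sum_pair (by norm_num), pow_one, hinv₁, hinv₂] at this

end MulChar

theorem sum_sum_addChar_mul_diagonal_cubic [DecidableEq F] {R : Type*} [CommRing R]
    [IsDomain R] {ψ : AddChar F R} (hψ : ψ.IsPrimitive) {χ : MulChar F R} (hχ : orderOf χ = 3)
    {a₁ a₂ a₃ : F} (ha₁ : a₁ ≠ 0) (ha₂ : a₂ ≠ 0) (ha₃ : a₃ ≠ 0) :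
    ∑ t : F, ∑ x : F × F × F, ψ (t * (a₁ * x.1 ^ 3 + a₂ * x.2.1 ^ 3 + a₃ * x.2.2 ^ 3)) =
      (Fintype.card F : R) ^ 3 + ((Fintype.card F : R) - 1) *
        ((χ ^ 2) (a₁ * a₂ * a₃) * gaussSum χ ψ ^ 3 +
          χ (a₁ * a₂ * a₃) * gaussSum (χ ^ 2) ψ ^ 3) := by
  set q : R := (Fintype.card F : R)
  set S : F → R := fun c => ∑ x : F, ψ (c * x ^ 3)
  have hfactor (t : F) :
      ∑ x : F × F × F, ψ (t * (a₁ * x.1 ^ 3 + a₂ * x.2.1 ^ 3 + a₃ * x.2.2 ^ 3)) =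
        S (t * a₁) * S (t * a₂) * S (t * a₃) := by
    simp_rw [mul_add, ← mul_assoc, add_assoc]
    rw [AddChar.sum_prod_add ψ (fun x => t * a₁ * x ^ 3)
        (fun y : F × F => t * a₂ * y.1 ^ 3 + t * a₃ * y.2 ^ 3),
      AddChar.sum_prod_add ψ (fun x => t * a₂ * x ^ 3) (fun x => t * a₃ * x ^ 3), mul_assoc]
  have hS₀ : S 0 = q := by simp [S, q]
  have hS (t : F) (ht : t ≠ 0) (a : F) (ha : a ≠ 0) :
      S (t * a) = χ t ^ 2 * ((χ ^ 2) a * gaussSum χ ψ) + χ t * (χ a * gaussSum (χ ^ 2) ψ) := by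
    rw [show S (t * a) = ∑ x, ψ (t * a * x ^ 3) from rfl,
      MulChar.sum_addChar_mul_cube_of_orderOf_eq_three hψ hχ (mul_ne_zero ht ha), map_mul,
      map_mul, MulChar.pow_apply' χ two_ne_zero t]
    ring
  calc _ = ∑ t, S (t * a₁) * S (t * a₂) * S (t * a₃) := sum_congr rfl fun t _ => hfactor t
    _ = q ^ 3 + ∑ t ∈ univ.erase 0, S (t * a₁) * S (t * a₂) * S (t * a₃) := by
      rw [← add_sum_erase _ _ (mem_univ 0)]
      simp only [zero_mul, hS₀]
      ring
    _ = q ^ 3 + ∑ t ∈ univ.erase 0,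
          (χ t ^ 2 * ((χ ^ 2) a₁ * gaussSum χ ψ) + χ t * (χ a₁ * gaussSum (χ ^ 2) ψ)) *
          (χ t ^ 2 * ((χ ^ 2) a₂ * gaussSum χ ψ) + χ t * (χ a₂ * gaussSum (χ ^ 2) ψ)) *
          (χ t ^ 2 * ((χ ^ 2) a₃ * gaussSum χ ψ) + χ t * (χ a₃ * gaussSum (χ ^ 2) ψ)) := by
      refine congrArg _ (sum_congr rfl fun t ht => ?_)
      rw [hS t (ne_of_mem_erase ht) _ ha₁, hS t (ne_of_mem_erase ht) _ ha₂,
        hS t (ne_of_mem_erase ht) _ ha₃]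
    _ = _ := by
      rw [sum_erase _ (by simp [χ.map_zero]), χ.sum_prod_sq_mul_add_mul_of_orderOf_eq_three hχ]
      simp only [map_mul, MulChar.pow_apply' χ two_ne_zero]
      ring

end

theorem count_diag_cubic_eq_gauss_general (F : Type*) [Field F] [Fintype F] [DecidableEq F]
    (ψ : AddChar F ℂ) (hψ : ∃ a : F, ψ a ≠ 1)
    (χ : MulChar F ℂ) (hχ : orderOf χ = 3)
    (a₁ a₂ a₃ : F) (ha₁ : a₁ ≠ 0) (ha₂ : a₂ ≠ 0) (ha₃ : a₃ ≠ 0) :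
    (Fintype.card {x : F × F × F //
        a₁ * x.1 ^ 3 + a₂ * x.2.1 ^ 3 + a₃ * x.2.2 ^ 3 = 0} : ℂ) =
      (Fintype.card F : ℂ) ^ 2 +
        ((Fintype.card F : ℂ) - 1) / (Fintype.card F : ℂ) *
          ((χ ^ 2) (a₁ * a₂ * a₃) * gaussSum χ ψ ^ 3 +
            χ (a₁ * a₂ * a₃) * gaussSum (χ ^ 2) ψ ^ 3) := by
  have hprim : ψ.IsPrimitive := AddChar.IsPrimitive.of_ne_one (AddChar.ne_one_iff.mpr hψ)
  have hq : (Fintype.card F : ℂ) ≠ 0 := Nat.cast_ne_zero.mpr Fintype.card_ne_zero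
  have hcount := AddChar.card_mul_card_eq_sum_sum hprim
    (fun x : F × F × F => a₁ * x.1 ^ 3 + a₂ * x.2.1 ^ 3 + a₃ * x.2.2 ^ 3)
  rw [sum_sum_addChar_mul_diagonal_cubic hprim hχ ha₁ ha₂ ha₃] at hcount
  field_simp
  linear_combination hcount

/-- For a finite field `F` with `q ≡ 1 (mod 3)`, the number of solutions of
`a₁x₁³ + a₂x₂³ + a₃x₃³ = 0` equals
`q² + ((q-1)/q)·(χ̄(a₁a₂a₃)·G(χ,ψ)³ + χ(a₁a₂a₃)·G(χ̄,ψ)³)`. -/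
theorem count_diag_cubic_eq_gauss (F : Type*) [Field F] [Fintype F] [DecidableEq F]
    (hq : Fintype.card F % 3 = 1)
    (ψ : AddChar F ℂ) (hψ : ∃ a : F, ψ a ≠ 1)
    (χ : MulChar F ℂ) (hχ : orderOf χ = 3)
    (a₁ a₂ a₃ : F) (ha₁ : a₁ ≠ 0) (ha₂ : a₂ ≠ 0) (ha₃ : a₃ ≠ 0) :
    (Fintype.card {x : F × F × F //
        a₁ * x.1 ^ 3 + a₂ * x.2.1 ^ 3 + a₃ * x.2.2 ^ 3 = 0} : ℂ) =
      (Fintype.card F : ℂ) ^ 2 +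
        ((Fintype.card F : ℂ) - 1) / (Fintype.card F : ℂ) *
          ((χ ^ 2) (a₁ * a₂ * a₃) * gaussSum χ ψ ^ 3 +
            χ (a₁ * a₂ * a₃) * gaussSum (χ ^ 2) ψ ^ 3) :=
  count_diag_cubic_eq_gauss_general F ψ hψ χ hχ a₁ a₂ a₃ ha₁ ha₂ ha₃
end

section
/- Let F_q be a finite field with q ≡ 1 (mod 3), ψ a nontrivial additive character, and χ a multiplicative character of order 3. For a ∈ F_q* let S(a) = ∑_{x∈F_q} ψ(a x³). If z ∈ F_q* is not a cube, then ∑_{a ∈ F_q*} S(a)² S(az) = (q−1)·(χ̄(z)·G(χ,ψ)³ + χ(z)·G(χ̄,ψ)³). -/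
open Finset

section Aux

variable {F : Type*} [Field F] [Fintype F] [DecidableEq F]

/-- Cube roots of unity number 3 when `q ≡ 1 [MOD 3]`. -/
lemma card_cube_roots_one (hq : Fintype.card F % 3 = 1) :
    (univ.filter (fun x : F => x ^ 3 = 1)).card = 3 := by
  have h1 : 1 < Fintype.card F := Fintype.one_lt_card
  obtain ⟨g, hg⟩ := IsCyclic.exists_generator (α := Fˣ)
  have hog : orderOf g = Fintype.card F - 1 := by
    rw [orderOf_eq_card_of_forall_mem_zpowers hg, Nat.card_eq_fintype_card, Fintype.card_units]
  set m := (Fintype.card F - 1) / 3 with hm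
  have hm3 : Fintype.card F - 1 = 3 * m := by omega
  have hm0 : m ≠ 0 := by omega
  have hoh : orderOf (g ^ m) = 3 := by
    rw [orderOf_pow, hog, hm3, Nat.gcd_eq_right ⟨3, by ring⟩, Nat.mul_div_cancel]
    omega
  have hprim : IsPrimitiveRoot ((g ^ m : Fˣ) : F) 3 := by
    have := IsPrimitiveRoot.orderOf ((g ^ m : Fˣ) : F)
    rwa [orderOf_units, hoh] at this
  have : univ.filter (fun x : F => x ^ 3 = 1) = Polynomial.nthRootsFinset 3 (1 : F) := by
    ext x
    simp [Polynomial.mem_nthRootsFinset (by norm_num : 0 < 3)]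
  rw [this, hprim.card_nthRootsFinset]

variable (χ : MulChar F ℂ) (hχ : orderOf χ = 3)
include hχ

lemma chi_cube : χ ^ 3 = 1 := by rw [← hχ]; exact pow_orderOf_eq_one χ

lemma chi_ne_one : χ ≠ 1 := by
  intro h; rw [h, orderOf_one] at hχ; omega

lemma chi_sq_ne_one : χ ^ 2 ≠ 1 := by
  intro h
  have := orderOf_dvd_of_pow_eq_one h
  rw [hχ] at this
  omega

lemma chi_cube_val {w : F} (hw : w ≠ 0) : χ (w ^ 3) = 1 := by
  rw [map_pow, ← MulChar.pow_apply' χ (by norm_num) w, chi_cube χ hχ,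
    MulChar.one_apply (isUnit_iff_ne_zero.mpr hw)]

/-- If `χ t = 1` with `t ≠ 0`, then `t` is a cube. -/
lemma cube_of_chi_eq_one {t : F} (ht : t ≠ 0) (h : χ t = 1) : ∃ w : F, w ^ 3 = t := by
  obtain ⟨g, hg⟩ := IsCyclic.exists_generator (α := Fˣ)
  -- χ ↑g ≠ 1
  have hgne : χ (g : F) ≠ 1 := by
    intro hone
    apply chi_ne_one χ hχ
    ext u
    obtain ⟨k, hk⟩ := ((isOfFinOrder_of_finite g).mem_powers_iff_mem_zpowers).2 (hg u)
    simp only [] at hk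
    rw [MulChar.one_apply_coe, ← hk, Units.val_pow_eq_pow_val, map_pow, hone, one_pow]
  have hg3 : χ (g : F) ^ 3 = 1 := by
    rw [← MulChar.pow_apply' χ (by norm_num), chi_cube χ hχ, MulChar.one_apply_coe]
  have hordg : orderOf (χ (g : F)) = 3 := by
    have hdvd : orderOf (χ (g : F)) ∣ 3 := orderOf_dvd_of_pow_eq_one hg3
    rcases (Nat.prime_three.eq_one_or_self_of_dvd _ hdvd) with h1 | h3
    · exact absurd (orderOf_eq_one_iff.mp h1) hgne
    · exact h3
  set u := (isUnit_iff_ne_zero.mpr ht).unit with hu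
  have hut : (u : F) = t := rfl
  obtain ⟨k, hk⟩ := ((isOfFinOrder_of_finite g).mem_powers_iff_mem_zpowers).2 (hg u)
  simp only [] at hk
  have hchik : χ (g : F) ^ k = 1 := by
    rw [← map_pow, ← Units.val_pow_eq_pow_val, hk, hut, h]
  have h3k : 3 ∣ k := hordg ▸ orderOf_dvd_of_pow_eq_one hchik
  obtain ⟨j, hj⟩ := h3k
  exact ⟨((g ^ j : Fˣ) : F), by
    rw [← Units.val_pow_eq_pow_val, ← pow_mul, Nat.mul_comm, ← hj, hk, hut]⟩

end Aux

section Key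

variable {F : Type*} [Field F] [Fintype F] [DecidableEq F]

/-- Number of cube roots of `t ≠ 0`. -/
lemma card_fiber (hq : Fintype.card F % 3 = 1) {t : F} (ht : t ≠ 0) :
    ((univ.filter (fun x : F => x ^ 3 = t)).card : ℂ) =
      (if ∃ w : F, w ^ 3 = t then 3 else 0) := by
  split_ifs with hc
  · obtain ⟨w, hw⟩ := hc
    have hw0 : w ≠ 0 := by rintro rfl; apply ht; rw [← hw]; ring
    have : (univ.filter (fun x : F => x ^ 3 = t)).card
        = (univ.filter (fun y : F => y ^ 3 = 1)).card := by
      apply Finset.card_nbij' (fun x => x / w) (fun y => y * w)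
      · intro x hx
        simp only [Finset.mem_coe, mem_filter, mem_univ, true_and] at hx ⊢
        rw [div_pow, hx, ← hw, div_self (pow_ne_zero 3 hw0)]
      · intro y hy
        simp only [Finset.mem_coe, mem_filter, mem_univ, true_and] at hy ⊢
        rw [mul_pow, hy, one_mul, hw]
      · intro x _; field_simp
      · intro y _; field_simp
    rw [this, card_cube_roots_one hq]; norm_num
  · have : (univ.filter (fun x : F => x ^ 3 = t)) = ∅ := by
      ext x
      simp only [mem_filter, mem_univ, true_and, Finset.notMem_empty, iff_false]
      exact fun hx => hc ⟨x, hx⟩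
    simp [this]

variable (ψ : AddChar F ℂ) (hψ : ∃ a : F, ψ a ≠ 1)
variable (χ : MulChar F ℂ) (hχ : orderOf χ = 3)
include hψ hχ

omit hψ hχ in
/-- Twisted Gauss sum evaluation for a character of order dividing 3. -/
lemma gauss_shift (χ' : MulChar F ℂ) (hc : χ' ^ 3 = 1) {a : F} (ha : a ≠ 0) :
    ∑ t : F, χ' t * ψ (a * t) = χ' a ^ 2 * gaussSum χ' ψ := by
  have h := gaussSum_mulShift χ' ψ (Units.mk0 a ha)
  have hXdef : gaussSum χ' (AddChar.mulShift ψ ((Units.mk0 a ha : Fˣ) : F))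
      = ∑ t : F, χ' t * ψ (a * t) := by
    simp [gaussSum, AddChar.mulShift_apply]
  rw [hXdef] at h
  simp only [Units.val_mk0] at h
  have hcube : χ' a ^ 3 = 1 := by
    rw [← MulChar.pow_apply' χ' three_ne_zero, hc,
      MulChar.one_apply (isUnit_iff_ne_zero.mpr ha)]
  linear_combination (χ' a ^ 2) * h - (∑ t : F, χ' t * ψ (a * t)) * hcube

/-- The key identity `S(a) = χ²(a) G(χ,ψ) + χ(a) G(χ²,ψ)`. -/
lemma S_eq (hq : Fintype.card F % 3 = 1) {a : F} (ha : a ≠ 0) :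
    ∑ x : F, ψ (a * x ^ 3) =
      (χ ^ 2) a * gaussSum χ ψ + χ a * gaussSum (χ ^ 2) ψ := by
  have hψprim : ψ.IsPrimitive := AddChar.IsPrimitive.of_ne_one
    (by rintro rfl; obtain ⟨b, hb⟩ := hψ; exact hb (AddChar.one_apply b))
  have hstep1 : ∑ x : F, ψ (a * x ^ 3)
      = ∑ t : F, ((univ.filter (fun x : F => x ^ 3 = t)).card : ℂ) * ψ (a * t) := by
    rw [← Finset.sum_fiberwise' univ (fun x : F => x ^ 3) (fun t => ψ (a * t))]
    exact Finset.sum_congr rfl fun t _ => by rw [Finset.sum_const, nsmul_eq_mul]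
  rw [hstep1, ← Finset.sum_erase_add _ _ (mem_univ (0 : F))]
  have hcard0 : (univ.filter (fun x : F => x ^ 3 = (0 : F))).card = 1 := by
    rw [Finset.card_eq_one]
    exact ⟨0, by ext x; simp [pow_eq_zero_iff]⟩
  have hfib : ∀ t ∈ (univ : Finset F).erase 0,
      ((univ.filter (fun x : F => x ^ 3 = t)).card : ℂ) * ψ (a * t)
        = (1 + χ t + (χ ^ 2) t) * ψ (a * t) := by
    intro t htmem
    have ht : t ≠ 0 := (Finset.mem_erase.mp htmem).1
    rw [card_fiber hq ht]
    congr 1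
    split_ifs with hc
    · obtain ⟨w, hw⟩ := hc
      have hw0 : w ≠ 0 := fun h => ht (by rw [← hw, h]; ring)
      have h1 : χ t = 1 := by rw [← hw]; exact chi_cube_val χ hχ hw0
      have h2 : (χ ^ 2) t = 1 := by
        rw [MulChar.pow_apply' χ two_ne_zero, h1, one_pow]
      rw [h1, h2]; norm_num
    · have hne : χ t ≠ 1 := fun h => hc (cube_of_chi_eq_one χ hχ ht h)
      have h3 : χ t ^ 3 = 1 := by
        rw [← MulChar.pow_apply' χ three_ne_zero, chi_cube χ hχ,
          MulChar.one_apply (isUnit_iff_ne_zero.mpr ht)]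
      have hfac : (χ t - 1) * (1 + χ t + χ t ^ 2) = 0 := by linear_combination h3
      rcases mul_eq_zero.mp hfac with h | h
      · exact absurd (sub_eq_zero.mp h) hne
      · rw [MulChar.pow_apply' χ two_ne_zero]
        linear_combination -h
  rw [Finset.sum_congr rfl hfib, hcard0]
  have hsum0 : ∑ t : F, ψ (a * t) = 0 := by
    have h := AddChar.sum_mulShift a hψprim
    rw [if_neg ha, Nat.cast_zero] at h
    rw [← h]
    exact Finset.sum_congr rfl fun t _ => by rw [mul_comm]
  have hA0 : ∑ t ∈ (univ : Finset F).erase 0, ψ (a * t) = -1 := by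
    have := Finset.sum_erase_add (univ : Finset F) (fun t => ψ (a * t)) (mem_univ (0 : F))
    rw [hsum0] at this
    simp only [mul_zero, AddChar.map_zero_eq_one] at this
    linear_combination this
  have hchi0 : χ (0 : F) = 0 := MulChar.map_nonunit χ not_isUnit_zero
  have hchi20 : (χ ^ 2) (0 : F) = 0 := MulChar.map_nonunit (χ ^ 2) not_isUnit_zero
  have hG1 : ∑ t ∈ (univ : Finset F).erase 0, χ t * ψ (a * t)
      = (χ ^ 2) a * gaussSum χ ψ := by
    rw [Finset.sum_erase _ (by rw [hchi0, zero_mul]),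
      gauss_shift ψ χ (chi_cube χ hχ) ha, MulChar.pow_apply' χ two_ne_zero]
  have hc2 : (χ ^ 2) ^ 3 = 1 := by
    rw [← pow_mul, mul_comm, pow_mul, chi_cube χ hχ, one_pow]
  have hcube : χ a ^ 3 = 1 := by
    rw [← MulChar.pow_apply' χ three_ne_zero, chi_cube χ hχ,
      MulChar.one_apply (isUnit_iff_ne_zero.mpr ha)]
  have hG2 : ∑ t ∈ (univ : Finset F).erase 0, (χ ^ 2) t * ψ (a * t)
      = χ a * gaussSum (χ ^ 2) ψ := by
    rw [Finset.sum_erase _ (by rw [hchi20, zero_mul]), gauss_shift ψ (χ ^ 2) hc2 ha]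
    congr 1
    rw [MulChar.pow_apply' χ two_ne_zero]
    linear_combination χ a * hcube
  simp only [add_mul, one_mul, Finset.sum_add_distrib, hA0, hG1, hG2, mul_zero,
    AddChar.map_zero_eq_one, Nat.cast_one]
  ring

end Key

open Finset in
/-- For `z` a non-cube, `∑_{a ≠ 0} S(a)² S(az) = (q−1)·(χ̄(z)·G(χ,ψ)³ + χ(z)·G(χ̄,ψ)³)`. -/
theorem sum_S_sq_S_eq (F : Type*) [Field F] [Fintype F] [DecidableEq F]
    (hq : Fintype.card F % 3 = 1)
    (ψ : AddChar F ℂ) (hψ : ∃ a : F, ψ a ≠ 1)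
    (χ : MulChar F ℂ) (hχ : orderOf χ = 3)
    (z : F) (hz : z ≠ 0) (hnc : ¬∃ w : F, w ^ 3 = z) :
    ∑ a ∈ univ \ {(0 : F)},
        (∑ x : F, ψ (a * x ^ 3)) ^ 2 * (∑ x : F, ψ (a * z * x ^ 3)) =
      ((Fintype.card F : ℂ) - 1) *
        ((χ ^ 2) z * gaussSum χ ψ ^ 3 + χ z * gaussSum (χ ^ 2) ψ ^ 3) := by
  set A := gaussSum χ ψ with hA
  set B := gaussSum (χ ^ 2) ψ with hB
  have hkey : ∀ a ∈ univ \ {(0 : F)},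
      (∑ x : F, ψ (a * x ^ 3)) ^ 2 * (∑ x : F, ψ (a * z * x ^ 3)) =
        ((χ ^ 2) z * A ^ 3 + χ z * B ^ 3)
        + (χ ^ 2) a * ((χ z + 2 * (χ ^ 2) z) * A ^ 2 * B)
        + χ a * ((2 * χ z + (χ ^ 2) z) * A * B ^ 2) := by
    intro a hamem
    have ha : a ≠ 0 := by
      simpa using (Finset.mem_sdiff.mp hamem).2
    have haz : a * z ≠ 0 := mul_ne_zero ha hz
    rw [S_eq ψ hψ χ hχ hq ha, S_eq ψ hψ χ hχ hq haz]
    have hmul : χ (a * z) = χ a * χ z := map_mul χ a z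
    have hmul2 : (χ ^ 2) (a * z) = (χ ^ 2) a * (χ ^ 2) z := map_mul (χ ^ 2) a z
    have hp2 : (χ ^ 2) a = χ a ^ 2 := MulChar.pow_apply' χ two_ne_zero a
    have hcube : χ a ^ 3 = 1 := by
      rw [← MulChar.pow_apply' χ three_ne_zero, chi_cube χ hχ,
        MulChar.one_apply (isUnit_iff_ne_zero.mpr ha)]
    rw [hmul, hmul2, hp2]
    linear_combination ((χ ^ 2) z * A ^ 3 * (χ a ^ 3 + 1)
      + (χ z + 2 * (χ ^ 2) z) * A ^ 2 * B * χ a ^ 2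
      + (2 * χ z + (χ ^ 2) z) * A * B ^ 2 * χ a
      + χ z * B ^ 3) * hcube
  rw [Finset.sum_congr rfl hkey]
  have herase : (univ : Finset F) \ {0} = (univ : Finset F).erase 0 := by
    rw [← Finset.sdiff_singleton_eq_erase]
  have hchi0 : χ (0 : F) = 0 := MulChar.map_nonunit χ not_isUnit_zero
  have hchi20 : (χ ^ 2) (0 : F) = 0 := MulChar.map_nonunit (χ ^ 2) not_isUnit_zero
  have hs1 : ∑ a ∈ univ \ {(0 : F)}, χ a = 0 := by
    rw [herase, Finset.sum_erase _ hchi0]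
    exact MulChar.sum_eq_zero_of_ne_one (chi_ne_one χ hχ)
  have hs2 : ∑ a ∈ univ \ {(0 : F)}, (χ ^ 2) a = 0 := by
    rw [herase, Finset.sum_erase _ hchi20]
    exact MulChar.sum_eq_zero_of_ne_one (chi_sq_ne_one χ hχ)
  have hcard : (((univ : Finset F) \ {0}).card : ℂ) = (Fintype.card F : ℂ) - 1 := by
    rw [herase, Finset.card_erase_of_mem (mem_univ 0), Finset.card_univ]
    have : 1 ≤ Fintype.card F := Fintype.card_pos
    push_cast [Nat.cast_sub this]
    ring
  simp only [Finset.sum_add_distrib, ← Finset.sum_mul, hs1, hs2, Finset.sum_const,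
    nsmul_eq_mul, zero_mul, add_zero]
  rw [hcard]
  ring
end

section
/- Let F_q be a finite field with q ≡ 1 (mod 3), ψ a nontrivial additive character, z ∈ F_q* a non-cube, and S(a) = ∑_{x∈F_q} ψ(ax³). Then S(1)S(z) + S(z)S(z²) + S(z²)S(1) = −3q. -/
/-!
Fix a character `χ` of order 3. Counting cube roots with `χ` expresses
`S(a)` for `a ≠ 0` through Gauss sums: `S(a) = 1 + ∑_{j<3} χ̄ʲ(a) G(χʲ) = χ(a)² A + χ(a) B` with
`A = G(χ)`, `B = G(χ̄)`, using `G(1) = -1`. Since `z` is not a cube, `ω = χ(z)` is a primitive cube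
root of unity, so `S(1), S(z), S(z²)` are `A + B, ω²A + ωB, ωA + ω²B`: they add up to `0` and their
squares add up to `6AB`, so their pairwise products add up to `-3AB`. Finally `AB = χ(-1) q = q`,
as `-1` is a cube.
-/

open Finset

namespace FiniteField

variable {F : Type*} [Field F] [Fintype F]

theorem exists_isPrimitiveRoot_of_dvd_card_sub_one_s13 {n : ℕ} (hn : n ∣ Fintype.card F - 1) :
    ∃ ζ : F, IsPrimitiveRoot ζ n := by
  classical
  obtain ⟨g, hg⟩ := IsCyclic.exists_ofOrder_eq_natCard (α := Fˣ)
  rw [Nat.card_eq_fintype_card, Fintype.card_units] at hg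
  have hq : Fintype.card F - 1 ≠ 0 := by have := Fintype.one_lt_card (α := F); omega
  refine ⟨(g ^ (orderOf g / n) : Fˣ), IsPrimitiveRoot.coe_units_iff.2 ?_⟩
  rw [IsPrimitiveRoot.iff_orderOf]
  exact orderOf_pow_orderOf_div (hg ▸ hq) (hg ▸ hn)

theorem card_filter_pow_eq_of_ne_zero {n : ℕ} (hn : n ∣ Fintype.card F - 1) {y : F}
    (hy : y ≠ 0) [DecidableEq F] [Decidable (∃ w : F, w ^ n = y)] :
    #{x | x ^ n = y} = if ∃ w : F, w ^ n = y then n else 0 := by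
  obtain ⟨ζ, hζ⟩ := exists_isPrimitiveRoot_of_dvd_card_sub_one_s13 hn
  have hn₀ : 0 < n := by
    refine Nat.pos_of_ne_zero fun h ↦ ?_
    have := Fintype.one_lt_card (α := F)
    simp only [h, zero_dvd_iff] at hn
    omega
  have hroots : ({x | x ^ n = y} : Finset F) = Polynomial.nthRootsFinset n y := by
    ext x
    simp [Polynomial.mem_nthRootsFinset hn₀]
  rw [hroots, Polynomial.nthRootsFinset]
  convert hζ.card_nthRoots y
  convert Multiset.toFinset_card_of_nodup (hζ.nthRoots_nodup hy)

end FiniteField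

namespace MulChar

variable {F R : Type*} [Field F] [Fintype F] [CommRing R]

theorem apply_eq_one_iff_exists_pow_eq (χ : MulChar F R) {y : F} (hy : y ≠ 0) :
    χ y = 1 ↔ ∃ w : F, w ^ orderOf χ = y := by
  constructor
  · intro h
    obtain ⟨g, hg⟩ := IsCyclic.exists_monoid_generator (α := Fˣ)
    have horder {k : ℕ} (hk : χ g ^ k = 1) : orderOf χ ∣ k := by
      refine orderOf_dvd_of_pow_eq_one (ext fun u ↦ ?_)
      obtain ⟨m, rfl⟩ := Submonoid.mem_powers_iff _ _ |>.1 (hg u)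
      rw [pow_apply_coe, one_apply_coe, Units.val_pow_eq_pow_val, map_pow, ← pow_mul,
        mul_comm, pow_mul, hk, one_pow]
    obtain ⟨k, hk⟩ := Submonoid.mem_powers_iff _ _ |>.1 (hg (Units.mk0 y hy))
    have hyk : y = (g : F) ^ k := by rw [← Units.val_pow_eq_pow_val, hk, Units.val_mk0]
    obtain ⟨m, rfl⟩ := horder (k := k) (by rw [← map_pow, ← hyk, h])
    exact ⟨(g : F) ^ m, by rw [← pow_mul, mul_comm, hyk]⟩
  · rintro ⟨w, rfl⟩
    have hw : IsUnit w := (pow_ne_zero_iff χ.orderOf_pos.ne').1 hy |>.isUnit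
    rw [map_pow, ← pow_apply' χ χ.orderOf_pos.ne', pow_orderOf_eq_one, one_apply hw]

theorem apply_neg_one_eq_one_of_odd (χ : MulChar F R) (hχ : Odd (orderOf χ)) : χ (-1) = 1 :=
  (χ.apply_eq_one_iff_exists_pow_eq (neg_ne_zero.2 one_ne_zero)).2 ⟨-1, hχ.neg_one_pow⟩

variable [IsDomain R]

theorem sum_range_apply_pow_eq_zero (χ : MulChar F R) {y : F} (hy : y ≠ 0)
    (hnp : ¬∃ w : F, w ^ orderOf χ = y) :
    ∑ j ∈ range (orderOf χ), χ y ^ j = 0 := by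
  have hne : χ y - 1 ≠ 0 := sub_ne_zero.2 fun h ↦ hnp ((χ.apply_eq_one_iff_exists_pow_eq hy).1 h)
  have hpow : χ y ^ orderOf χ = 1 := by
    rw [← pow_apply' χ χ.orderOf_pos.ne', pow_orderOf_eq_one, one_apply hy.isUnit]
  have := geom_sum_mul (χ y) (orderOf χ)
  rw [hpow, sub_self] at this
  exact (mul_eq_zero.1 this).resolve_right hne

theorem natCast_card_filter_pow_eq [DecidableEq F] (χ : MulChar F R) (y : F) :
    (#{x | x ^ orderOf χ = y} : R) =
      (if y = 0 then 1 else 0) + ∑ j ∈ range (orderOf χ), (χ ^ j) y := by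
  rcases eq_or_ne y 0 with rfl | hy
  · -- the trivial character vanishes at `0`, so the fibre over `0` needs its own term
    have : ({x | x ^ orderOf χ = 0} : Finset F) = {0} := by
      ext x
      simp [pow_eq_zero_iff χ.orderOf_pos.ne']
    simp [this]
  classical
  have hpow (j : ℕ) : (χ ^ j) y = χ y ^ j := hy.isUnit.unit_spec ▸ pow_apply_coe χ j _
  rw [if_neg hy, zero_add, sum_congr rfl fun j _ ↦ hpow j,
    FiniteField.card_filter_pow_eq_of_ne_zero (orderOf_dvd_card_sub_one F χ) hy]
  split_ifs with h
  · simp [(χ.apply_eq_one_iff_exists_pow_eq hy).2 h]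
  · simp [χ.sum_range_apply_pow_eq_zero hy h]

end MulChar

section GaussSum

variable {F R : Type*} [Field F] [Fintype F] [CommRing R] [IsDomain R]

theorem sum_addChar_mul_pow_orderOf_eq (χ : MulChar F R) (ψ : AddChar F R) {a : F} (ha : a ≠ 0) :
    ∑ x, ψ (a * x ^ orderOf χ) =
      1 + ∑ j ∈ range (orderOf χ), (χ ^ j)⁻¹ a * gaussSum (χ ^ j) ψ := by
  classical
  calc ∑ x, ψ (a * x ^ orderOf χ)
      = ∑ y, (#{x | x ^ orderOf χ = y} : R) * ψ (a * y) := by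
        rw [← sum_fiberwise' univ (· ^ orderOf χ) fun y ↦ ψ (a * y)]
        simp [sum_const, nsmul_eq_mul]
    _ = ψ (a * 0) + ∑ j ∈ range (orderOf χ), gaussSum (χ ^ j) (ψ.mulShift a) := by
        rw [sum_congr rfl fun y _ ↦ by rw [MulChar.natCast_card_filter_pow_eq χ y]]
        simp only [add_mul, sum_add_distrib, ite_mul, one_mul, zero_mul,
          sum_ite_eq', mem_univ, if_true, sum_mul, gaussSum, AddChar.mulShift_apply]
        rw [sum_comm]
    _ = _ := by
        simp only [mul_zero, AddChar.map_zero_eq_one]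
        congr! 2 with j
        exact gaussSum_mulShift_eq _ ψ (Units.mk0 a ha)

theorem gaussSum_mul_gaussSum_inv_of_odd_orderOf {χ : MulChar F R} (hχ : χ ≠ 1)
    (hodd : Odd (orderOf χ)) {ψ : AddChar F R} (hψ : ψ.IsPrimitive) :
    gaussSum χ ψ * gaussSum χ⁻¹ ψ = Fintype.card F := by
  rw [← mul_gaussSum_inv_eq_gaussSum χ⁻¹ ψ, MulChar.inv_apply', inv_neg_one,
    χ.apply_neg_one_eq_one_of_odd hodd, one_mul, gaussSum_mul_gaussSum_eq_card hχ hψ]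

theorem sum_addChar_mul_cube_eq {χ : MulChar F R} (hχ : orderOf χ = 3) {ψ : AddChar F R}
    (hψ : ψ ≠ 1) {a : F} (ha : a ≠ 0) :
    ∑ x, ψ (a * x ^ 3) = χ a ^ 2 * gaussSum χ ψ + χ a * gaussSum χ⁻¹ ψ := by
  have hsq : χ ^ 2 = χ⁻¹ := eq_inv_of_mul_eq_one_left <| by
    rw [← pow_succ, show 2 + 1 = orderOf χ by omega, pow_orderOf_eq_one]
  have hinv : χ⁻¹ a = χ a ^ 2 := by rw [← hsq, MulChar.pow_apply' χ two_ne_zero]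
  rw [← hχ, sum_addChar_mul_pow_orderOf_eq χ ψ ha, hχ, sum_range_succ, sum_range_succ,
    sum_range_one, pow_zero, pow_one, hsq, inv_inv, inv_one, hinv, MulChar.one_apply ha.isUnit,
    gaussSum_one_left hψ]
  ring

end GaussSum

/-- For `z` a non-cube, `S(1)S(z) + S(z)S(z²) + S(z²)S(1) = −3q`. -/
theorem sum_pairwise_products_eq_neg_three_q (F : Type*) [Field F] [Fintype F]
    (hq : Fintype.card F % 3 = 1)
    (ψ : AddChar F ℂ) (hψ : ∃ a : F, ψ a ≠ 1)
    (z : F) (hz : z ≠ 0) (hnc : ¬∃ w : F, w ^ 3 = z) :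
    (∑ x : F, ψ (x ^ 3)) * (∑ x : F, ψ (z * x ^ 3)) +
      (∑ x : F, ψ (z * x ^ 3)) * (∑ x : F, ψ (z ^ 2 * x ^ 3)) +
      (∑ x : F, ψ (z ^ 2 * x ^ 3)) * (∑ x : F, ψ (x ^ 3)) =
        -3 * (Fintype.card F : ℂ) := by
  obtain ⟨χ, hχ⟩ := MulChar.exists_mulChar_orderOf F (n := 3) (by omega)
    (Complex.isPrimitiveRoot_exp 3 (by norm_num))
  have hψ₁ : ψ ≠ 1 := fun h ↦ hψ.elim fun a ha ↦ ha (h ▸ AddChar.one_apply a)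
  have hχ₁ : χ ≠ 1 := fun h ↦ by simp [h] at hχ
  have hω : 1 + χ z + χ z ^ 2 = 0 := by
    simpa [hχ, sum_range_succ] using χ.sum_range_apply_pow_eq_zero hz (by rwa [hχ])
  have hG : gaussSum χ ψ * gaussSum χ⁻¹ ψ = Fintype.card F :=
    gaussSum_mul_gaussSum_inv_of_odd_orderOf hχ₁ (by rw [hχ]; decide)
      (AddChar.IsPrimitive.of_ne_one hψ₁)
  have hS₁ : ∑ x : F, ψ (x ^ 3) = gaussSum χ ψ + gaussSum χ⁻¹ ψ := by
    simpa using sum_addChar_mul_cube_eq hχ hψ₁ one_ne_zero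
  rw [hS₁, sum_addChar_mul_cube_eq hχ hψ₁ hz, sum_addChar_mul_cube_eq hχ hψ₁ (pow_ne_zero 2 hz),
    map_pow]
  -- the coefficient of `hω` is the quotient of `LHS + 3 G(χ) G(χ⁻¹)` by `1 + χ z + χ z ^ 2`
  linear_combination
    ((χ z ^ 4 - χ z ^ 3 + χ z ^ 2) * gaussSum χ ψ ^ 2
      + (χ z ^ 3 + χ z ^ 2 - 2 * χ z + 3) * gaussSum χ ψ * gaussSum χ⁻¹ ψ
      + χ z * gaussSum χ⁻¹ ψ ^ 2) * hω - 3 * hG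
end

section
/- Let F_q be a finite field with q ≡ 1 (mod 3), ψ a nontrivial additive character, χ a cubic multiplicative character, z ∈ F_q* a non-cube, and S(a) = ∑_{x∈F_q} ψ(ax³). Then S(1)S(z)S(z²) = G(χ,ψ)³ + G(χ̄,ψ)³, i.e., the product of the three cubic Gauss sums over coset representatives equals G(χ,ψ)³ + G(χ̄,ψ)³. -/
open Finset Polynomial

section aux

variable {F : Type*} [Field F] [Fintype F]

/-- kernel of a cubic character on the units equals the cubes -/
private lemma cube_iff_chi_eq_one
    (χ : MulChar F ℂ) (hχ : orderOf χ = 3) {b : F} (hb : b ≠ 0) :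
    (∃ w : F, w ^ 3 = b) ↔ χ b = 1 := by
  classical
  have hχ3 : χ ^ 3 = 1 := hχ ▸ pow_orderOf_eq_one χ
  have hχ1 : χ ≠ 1 := by
    intro h
    rw [h, orderOf_one] at hχ
    norm_num at hχ
  obtain ⟨g, hg⟩ := IsCyclic.exists_generator (α := Fˣ)
  -- χ(g) has order 3
  have hvalcube : ∀ x : F, x ≠ 0 → χ x ^ 3 = 1 := by
    intro x hx
    rw [← MulChar.pow_apply' χ (by norm_num) x, hχ3,
      MulChar.one_apply (isUnit_iff_ne_zero.mpr hx)]
  have hc3 : χ (g : F) ^ 3 = 1 := hvalcube _ (Units.ne_zero g)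
  have hcne : χ (g : F) ≠ 1 := by
    intro h
    apply hχ1
    apply MulChar.ext
    intro u
    obtain ⟨n, hn⟩ := mem_powers_iff_mem_zpowers.mpr (hg u)
    have hn' : g ^ n = u := hn
    rw [← hn', MulChar.one_apply_coe, Units.val_pow_eq_pow_val, map_pow, h, one_pow]
  have horder : orderOf (χ (g : F)) = 3 := by
    have hdvd : orderOf (χ (g : F)) ∣ 3 := orderOf_dvd_of_pow_eq_one hc3
    rcases (Nat.prime_three).eq_one_or_self_of_dvd _ hdvd with h | h
    · exact absurd (orderOf_eq_one_iff.mp h) hcne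
    · exact h
  constructor
  · rintro ⟨w, rfl⟩
    have hw : w ≠ 0 := by
      intro h
      apply hb
      simp [h]
    rw [map_pow]
    exact hvalcube w hw
  · intro h1
    obtain ⟨u, hu⟩ := isUnit_iff_ne_zero.mpr hb
    obtain ⟨n, hn⟩ := mem_powers_iff_mem_zpowers.mpr (hg u)
    have hn' : g ^ n = u := hn
    have hpow : χ (g : F) ^ n = 1 := by
      rw [← map_pow, ← Units.val_pow_eq_pow_val, hn', hu, h1]
    have h3n : 3 ∣ n := horder ▸ orderOf_dvd_of_pow_eq_one hpow
    obtain ⟨m, rfl⟩ := h3n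
    refine ⟨((g ^ m : Fˣ) : F), ?_⟩
    rw [← Units.val_pow_eq_pow_val, ← pow_mul, Nat.mul_comm m 3, hn', hu]

/-- counting cube roots: the number of `x` with `x³ = b`, as a complex number,
is `1 + χ b + (χ b)²`. -/
private lemma card_cube_fiber
    (hq : Fintype.card F % 3 = 1)
    (χ : MulChar F ℂ) (hχ : orderOf χ = 3) (b : F) [DecidablePred fun x : F => x ^ 3 = b] :
    ((Finset.univ.filter fun x : F => x ^ 3 = b).card : ℂ) = 1 + χ b + χ b ^ 2 := by
  classical
  -- a primitive cube root of unity in F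
  obtain ⟨g, hg⟩ := IsCyclic.exists_generator (α := Fˣ)
  have hcard : orderOf g = Fintype.card F - 1 := by
    rw [orderOf_eq_card_of_forall_mem_zpowers hg, Nat.card_eq_fintype_card, Fintype.card_units]
  have hq2 : 2 ≤ Fintype.card F := Fintype.one_lt_card
  have h3 : (3 : ℕ) ∣ Fintype.card F - 1 := ⟨Fintype.card F / 3, by omega⟩
  obtain ⟨m, hm⟩ := h3
  have hm0 : m ≠ 0 := by
    intro h
    rw [h] at hm
    omega
  have hζord : orderOf (g ^ m) = 3 := by
    rw [orderOf_pow, hcard, hm, Nat.gcd_eq_right ⟨3, by ring⟩]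
    exact Nat.mul_div_cancel _ (Nat.pos_of_ne_zero hm0)
  have hζu : IsPrimitiveRoot (g ^ m) 3 := hζord ▸ IsPrimitiveRoot.orderOf (g ^ m)
  have hζ : IsPrimitiveRoot ((g ^ m : Fˣ) : F) 3 := IsPrimitiveRoot.coe_units_iff.mpr hζu
  by_cases hb : b = 0
  · subst hb
    have : (Finset.univ.filter fun x : F => x ^ 3 = 0) = {0} := by
      ext x
      simp [pow_eq_zero_iff (n := 3) (by norm_num)]
    rw [this]
    simp [MulChar.map_zero]
  · have hfil : (Finset.univ.filter fun x : F => x ^ 3 = b) = (nthRoots 3 b).toFinset := by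
      ext x
      simp [Polynomial.mem_nthRoots (by norm_num : 0 < 3)]
    rw [hfil, Multiset.toFinset_card_of_nodup (hζ.nthRoots_nodup hb), hζ.card_nthRoots b]
    by_cases hcube : ∃ α : F, α ^ 3 = b
    · rw [if_pos hcube, (cube_iff_chi_eq_one χ hχ hb).mp hcube]
      norm_num
    · rw [if_neg hcube]
      have hne1 : χ b ≠ 1 := fun h => hcube ((cube_iff_chi_eq_one χ hχ hb).mpr h)
      have hχ3 : χ ^ 3 = 1 := by rw [← hχ]; exact pow_orderOf_eq_one χ
      have hval3 : χ b ^ 3 = 1 := by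
        rw [← MulChar.pow_apply' χ (by norm_num) b, hχ3,
          MulChar.one_apply (isUnit_iff_ne_zero.mpr hb)]
      have hfac : (χ b - 1) * (1 + χ b + χ b ^ 2) = 0 := by linear_combination hval3
      rcases mul_eq_zero.mp hfac with h | h
      · exact absurd (sub_eq_zero.mp h) hne1
      · rw [Nat.cast_zero]
        exact h.symm

end aux

/-- For `z` a non-cube, `S(1)S(z)S(z²) = G(χ,ψ)³ + G(χ̄,ψ)³`. -/
theorem prod_S_eq_gauss_cubes (F : Type*) [Field F] [Fintype F]
    (hq : Fintype.card F % 3 = 1)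
    (ψ : AddChar F ℂ) (hψ : ∃ a : F, ψ a ≠ 1)
    (χ : MulChar F ℂ) (hχ : orderOf χ = 3)
    (z : F) (hz : z ≠ 0) (hnc : ¬∃ w : F, w ^ 3 = z) :
    (∑ x : F, ψ (x ^ 3)) * (∑ x : F, ψ (z * x ^ 3)) * (∑ x : F, ψ (z ^ 2 * x ^ 3)) =
      gaussSum χ ψ ^ 3 + gaussSum (χ ^ 2) ψ ^ 3 := by
  classical
  have hχ3 : χ ^ 3 = 1 := hχ ▸ pow_orderOf_eq_one χ
  have hvalcube : ∀ x : F, x ≠ 0 → χ x ^ 3 = 1 := by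
    intro x hx
    rw [← MulChar.pow_apply' χ (by norm_num) x, hχ3,
      MulChar.one_apply (isUnit_iff_ne_zero.mpr hx)]
  -- the sum transform
  have key : ∀ f : F → ℂ, (∑ x : F, f (x ^ 3)) = ∑ b : F, (1 + χ b + χ b ^ 2) * f b := by
    intro f
    rw [← Finset.sum_fiberwise' Finset.univ (fun x : F => x ^ 3) f]
    refine Finset.sum_congr rfl fun b _ => ?_
    rw [Finset.sum_const, nsmul_eq_mul, card_cube_fiber hq χ hχ b]
  -- the formula for S(a)
  have Sform : ∀ a : F, a ≠ 0 →
      (∑ x : F, ψ (a * x ^ 3)) = χ a ^ 2 * gaussSum χ ψ + χ a * gaussSum (χ ^ 2) ψ := by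
    intro a ha
    have h := key fun b => ψ (a * b)
    rw [h]
    have split : ∑ b : F, (1 + χ b + χ b ^ 2) * ψ (a * b) =
        (∑ b : F, ψ (a * b)) + (∑ b : F, χ b * ψ (a * b)) + ∑ b : F, χ b ^ 2 * ψ (a * b) := by
      rw [← Finset.sum_add_distrib, ← Finset.sum_add_distrib]
      refine Finset.sum_congr rfl fun b _ => by ring
    rw [split]
    have h0 : (∑ b : F, ψ (a * b)) = 0 := by
      have hb := Fintype.sum_bijective _ (mulLeft_bijective₀ a ha)
        (fun b : F => ψ (a * b)) (fun b : F => ψ b) (fun x => rfl)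
      rw [hb]
      exact AddChar.sum_eq_zero_iff_ne_zero.mpr (AddChar.ne_zero_iff.mpr hψ)
    set ua : Fˣ := (isUnit_iff_ne_zero.mpr ha).unit with hua
    have huaval : (ua : F) = a := rfl
    have hG1 : (∑ b : F, χ b * ψ (a * b)) = χ a ^ 2 * gaussSum χ ψ := by
      have hms : gaussSum χ (ψ.mulShift a) = ∑ b : F, χ b * ψ (a * b) := by
        simp [gaussSum, AddChar.mulShift_apply]
      have h := gaussSum_mulShift χ ψ ua
      rw [huaval] at h
      calc (∑ b : F, χ b * ψ (a * b)) = χ a ^ 3 * gaussSum χ (ψ.mulShift a) := by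
              rw [hvalcube a ha, one_mul, hms]
        _ = χ a ^ 2 * (χ a * gaussSum χ (ψ.mulShift a)) := by ring
        _ = χ a ^ 2 * gaussSum χ ψ := by rw [h]
    have hG2 : (∑ b : F, χ b ^ 2 * ψ (a * b)) = χ a * gaussSum (χ ^ 2) ψ := by
      have hms : gaussSum (χ ^ 2) (ψ.mulShift a) = ∑ b : F, χ b ^ 2 * ψ (a * b) := by
        simp [gaussSum, AddChar.mulShift_apply, MulChar.pow_apply' χ (two_ne_zero) _]
      have h := gaussSum_mulShift (χ ^ 2) ψ ua
      rw [huaval, MulChar.pow_apply' χ (two_ne_zero) a] at h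
      calc (∑ b : F, χ b ^ 2 * ψ (a * b))
          = χ a ^ 3 * gaussSum (χ ^ 2) (ψ.mulShift a) := by
              rw [hvalcube a ha, one_mul, hms]
        _ = χ a * (χ a ^ 2 * gaussSum (χ ^ 2) (ψ.mulShift a)) := by ring
        _ = χ a * gaussSum (χ ^ 2) ψ := by rw [h]
    rw [h0, hG1, hG2, zero_add]
  -- now specialize
  set G := gaussSum χ ψ with hGdef
  set B := gaussSum (χ ^ 2) ψ with hBdef
  set ω := χ z with hωdef
  have hω3 : ω ^ 3 = 1 := hvalcube z hz
  have hωne : ω ≠ 1 := fun h => hnc ((cube_iff_chi_eq_one χ hχ hz).mpr h)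
  have hs : 1 + ω + ω ^ 2 = 0 := by
    have hfac : (ω - 1) * (1 + ω + ω ^ 2) = 0 := by linear_combination hω3
    rcases mul_eq_zero.mp hfac with h | h
    · exact absurd (sub_eq_zero.mp h) hωne
    · exact h
  have hz2 : z ^ 2 ≠ 0 := pow_ne_zero 2 hz
  have S1 : (∑ x : F, ψ (x ^ 3)) = G + B := by
    have := Sform 1 one_ne_zero
    simpa using this
  have Sz : (∑ x : F, ψ (z * x ^ 3)) = ω ^ 2 * G + ω * B := Sform z hz
  have Sz2 : (∑ x : F, ψ (z ^ 2 * x ^ 3)) = (ω ^ 2) ^ 2 * G + ω ^ 2 * B := by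
    have := Sform (z ^ 2) hz2
    rw [map_pow] at this
    exact this
  rw [S1, Sz, Sz2]
  linear_combination ((ω ^ 3 + 1) * G ^ 3 + B ^ 3) * hω3 +
    (ω ^ 4 * G ^ 2 * B + ω ^ 3 * G * B ^ 2) * hs
end

section
/- Let F_q be a finite field with q ≡ 1 (mod 3), and let a₁, a₂, a₃ ∈ F_q*. Let M be the number of solutions in F_q³ of a₁x₁³ + a₂x₂³ + a₃x₃³ = 0 and N the number of solutions in F_q² of a₁x₁³ + a₂x₂³ = a₃. If a₁a₂⁻¹ is a cube in F_q*, then M = (q−1)·N + 3q − 2; if a₁a₂⁻¹ is not a cube, then M = (q−1)·N + 1. -/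
open Polynomial

lemma cube_count_aux (F : Type*) [Field F] [Fintype F] [DecidableEq F]
    (hq : Fintype.card F % 3 = 1) (c : F) (hc : c ≠ 0) :
    Fintype.card {u : F // u ^ 3 = c} = if ∃ v : F, v ^ 3 = c then 3 else 0 := by
  have hdvd : 3 ∣ Fintype.card Fˣ := by
    rw [Fintype.card_units]
    have h1 : 1 ≤ Fintype.card F := Fintype.card_pos
    omega
  obtain ⟨ζ, hζ⟩ := exists_prime_orderOf_dvd_card (G := Fˣ) 3 hdvd
  have hprim : IsPrimitiveRoot ((ζ : F)) 3 := by
    rw [IsPrimitiveRoot.coe_units_iff]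
    exact hζ ▸ IsPrimitiveRoot.orderOf ζ
  have hnodup := hprim.nthRoots_nodup (a := c) hc
  have hcard := hprim.card_nthRoots c
  have key : Fintype.card {u : F // u ^ 3 = c} = Multiset.card (nthRoots 3 c) := by
    rw [Fintype.card_subtype, ← Multiset.toFinset_card_of_nodup hnodup]
    congr 1
    ext x
    simp [Polynomial.mem_nthRoots (by norm_num : 0 < 3)]
  rw [key, hcard]; congr 1

lemma cube_iff_aux (F : Type*) [Field F] (a₁ a₂ : F) (ha₁ : a₁ ≠ 0) (ha₂ : a₂ ≠ 0) :
    (∃ v : F, v ≠ 0 ∧ v ^ 3 = a₁ * a₂⁻¹) ↔ (∃ v : F, v ^ 3 = -(a₂ * a₁⁻¹)) := by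
  have hc : -(a₂ * a₁⁻¹) ≠ 0 := by simp [ha₁, ha₂]
  constructor
  · rintro ⟨v, hv0, hv⟩
    refine ⟨-v⁻¹, ?_⟩
    have : v ^ 3 * a₂ = a₁ := by rw [hv]; field_simp
    field_simp
    linear_combination this
  · rintro ⟨v, hv⟩
    have hv0 : v ≠ 0 := by
      intro h; rw [h] at hv; simp at hv
      rcases hv with h1 | h1 <;> simp_all
    refine ⟨-v⁻¹, by simp [hv0], ?_⟩
    have : v ^ 3 * a₁ = -a₂ := by rw [hv]; field_simp
    field_simp
    linear_combination -this

def equiv_nonzero_part (F : Type*) [Field F] (a₁ a₂ a₃ : F) :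
    {x : F × F × F // (a₁ * x.1 ^ 3 + a₂ * x.2.1 ^ 3 + a₃ * x.2.2 ^ 3 = 0) ∧ x.2.2 ≠ 0} ≃
    {t : F // t ≠ 0} × {y : F × F // a₁ * y.1 ^ 3 + a₂ * y.2 ^ 3 = a₃} :=
  { toFun := fun x => (⟨x.1.2.2, x.2.2⟩,
      ⟨(-x.1.1 / x.1.2.2, -x.1.2.1 / x.1.2.2), by
        have h := x.2.1
        have ht := x.2.2
        field_simp
        linear_combination -h⟩)
    invFun := fun p => ⟨(-(p.1 : F) * p.2.1.1, -(p.1 : F) * p.2.1.2, (p.1 : F)), by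
      have h := p.2.2
      refine ⟨?_, p.1.2⟩
      linear_combination (-((p.1 : F) ^ 3)) * h⟩
    left_inv := fun x => by
      have ht := x.2.2
      apply Subtype.ext
      ext <;> field_simp
    right_inv := fun p => by
      have ht := p.1.2
      apply Prod.ext
      · apply Subtype.ext; simp
      · apply Subtype.ext
        ext <;> field_simp }

def equiv_zero_part (F : Type*) [Field F] (a₁ a₂ a₃ : F) :
    {x : F × F × F // (a₁ * x.1 ^ 3 + a₂ * x.2.1 ^ 3 + a₃ * x.2.2 ^ 3 = 0) ∧ x.2.2 = 0} ≃
    {y : F × F // a₁ * y.1 ^ 3 + a₂ * y.2 ^ 3 = 0} :=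
  { toFun := fun x => ⟨(x.1.1, x.1.2.1), by
      have h := x.2.1; have h0 := x.2.2
      rw [h0] at h
      simpa using h⟩
    invFun := fun y => ⟨(y.1.1, y.1.2, 0), by
      have h := y.2
      constructor
      · simpa using h
      · rfl⟩
    left_inv := fun x => by
      apply Subtype.ext
      have h0 := x.2.2
      ext <;> simp [h0.symm]
    right_inv := fun y => by apply Subtype.ext; rfl }

def equiv_cube_part (F : Type*) [Field F] (a₁ a₂ : F) (ha₁ : a₁ ≠ 0) :
    {y : F × F // (a₁ * y.1 ^ 3 + a₂ * y.2 ^ 3 = 0) ∧ y.2 ≠ 0} ≃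
    {u : F // u ^ 3 = -(a₂ * a₁⁻¹)} × {t : F // t ≠ 0} :=
  { toFun := fun y => (⟨y.1.1 / y.1.2, by
      have h := y.2.1; have ht := y.2.2
      field_simp
      linear_combination h⟩, ⟨y.1.2, y.2.2⟩)
    invFun := fun p => ⟨((p.1 : F) * p.2.1, (p.2 : F)), by
      have hu := p.1.2
      refine ⟨?_, p.2.2⟩
      have h2 : a₁ * ((p.1 : F) ^ 3) = -a₂ := by
        rw [hu]; field_simp
      calc a₁ * ((p.1 : F) * ((p.2 : F) : F)) ^ 3 + a₂ * ((p.2 : F) : F) ^ 3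
          = a₁ * (p.1 : F) ^ 3 * ((p.2 : F) : F) ^ 3 + a₂ * ((p.2 : F) : F) ^ 3 := by ring
        _ = 0 := by rw [h2]; ring⟩
    left_inv := fun y => by
      have ht := y.2.2
      apply Subtype.ext
      ext
      · simp only; field_simp
      · rfl
    right_inv := fun p => by
      have ht := p.2.2
      apply Prod.ext
      · apply Subtype.ext
        simp only
        field_simp
      · apply Subtype.ext; rfl }

/-- Relation between the homogeneous count `M` and the inhomogeneous count `N` for
diagonal cubic equations in a finite field with `q ≡ 1 (mod 3)`. -/
theorem M_eq_N_relation (F : Type*) [Field F] [Fintype F] [DecidableEq F]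
    (hq : Fintype.card F % 3 = 1)
    (a₁ a₂ a₃ : F) (ha₁ : a₁ ≠ 0) (ha₂ : a₂ ≠ 0) (ha₃ : a₃ ≠ 0) :
    (((∃ v : F, v ≠ 0 ∧ v ^ 3 = a₁ * a₂⁻¹) →
      Fintype.card {x : F × F × F //
          a₁ * x.1 ^ 3 + a₂ * x.2.1 ^ 3 + a₃ * x.2.2 ^ 3 = 0} =
        (Fintype.card F - 1) *
          Fintype.card {x : F × F // a₁ * x.1 ^ 3 + a₂ * x.2 ^ 3 = a₃} +
          3 * Fintype.card F - 2) ∧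
     ((¬∃ v : F, v ≠ 0 ∧ v ^ 3 = a₁ * a₂⁻¹) →
      Fintype.card {x : F × F × F //
          a₁ * x.1 ^ 3 + a₂ * x.2.1 ^ 3 + a₃ * x.2.2 ^ 3 = 0} =
        (Fintype.card F - 1) *
          Fintype.card {x : F × F // a₁ * x.1 ^ 3 + a₂ * x.2 ^ 3 = a₃} + 1)) := by
  have hc : -(a₂ * a₁⁻¹) ≠ (0 : F) := by simp [ha₁, ha₂]
  have hsplit : Fintype.card {x : F × F × F //
      a₁ * x.1 ^ 3 + a₂ * x.2.1 ^ 3 + a₃ * x.2.2 ^ 3 = 0} =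
      Fintype.card {x : F × F × F //
        (a₁ * x.1 ^ 3 + a₂ * x.2.1 ^ 3 + a₃ * x.2.2 ^ 3 = 0) ∧ x.2.2 = 0} +
      Fintype.card {x : F × F × F //
        (a₁ * x.1 ^ 3 + a₂ * x.2.1 ^ 3 + a₃ * x.2.2 ^ 3 = 0) ∧ x.2.2 ≠ 0} := by
    rw [Fintype.card_subtype, Fintype.card_subtype, Fintype.card_subtype,
      ← Finset.filter_filter, ← Finset.filter_filter,
      Finset.card_filter_add_card_filter_not]
  have hsplit2 : Fintype.card {y : F × F // a₁ * y.1 ^ 3 + a₂ * y.2 ^ 3 = 0} =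
      Fintype.card {y : F × F // (a₁ * y.1 ^ 3 + a₂ * y.2 ^ 3 = 0) ∧ y.2 = 0} +
      Fintype.card {y : F × F // (a₁ * y.1 ^ 3 + a₂ * y.2 ^ 3 = 0) ∧ y.2 ≠ 0} := by
    rw [Fintype.card_subtype, Fintype.card_subtype, Fintype.card_subtype,
      ← Finset.filter_filter, ← Finset.filter_filter,
      Finset.card_filter_add_card_filter_not]
  have hzero : Fintype.card {y : F × F // (a₁ * y.1 ^ 3 + a₂ * y.2 ^ 3 = 0) ∧ y.2 = 0} = 1 := by
    rw [Fintype.card_eq_one_iff]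
    refine ⟨⟨(0, 0), by simp⟩, ?_⟩
    rintro ⟨⟨y₁, y₂⟩, hy, hy2⟩
    simp only at hy2
    subst hy2
    apply Subtype.ext
    have h3 : y₁ ^ 3 = 0 := by
      have h4 : a₁ * y₁ ^ 3 = 0 := by simpa using hy
      exact (mul_eq_zero.mp h4).resolve_left ha₁
    have hy1 : y₁ = 0 := pow_eq_zero_iff (by norm_num) |>.mp h3
    simp [hy1]
  have hne : Fintype.card {t : F // t ≠ 0} = Fintype.card F - 1 := by
    rw [← Fintype.card_congr (unitsEquivNeZero (G₀ := F)), Fintype.card_units]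
  have hcube : Fintype.card {u : F // u ^ 3 = -(a₂ * a₁⁻¹)} =
      if ∃ v : F, v ^ 3 = -(a₂ * a₁⁻¹) then 3 else 0 := cube_count_aux F hq _ hc
  have hM : Fintype.card {x : F × F × F //
      a₁ * x.1 ^ 3 + a₂ * x.2.1 ^ 3 + a₃ * x.2.2 ^ 3 = 0} =
      (1 + (if ∃ v : F, v ^ 3 = -(a₂ * a₁⁻¹) then 3 else 0) * (Fintype.card F - 1)) +
      (Fintype.card F - 1) *
        Fintype.card {y : F × F // a₁ * y.1 ^ 3 + a₂ * y.2 ^ 3 = a₃} := by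
    rw [hsplit, Fintype.card_congr (equiv_nonzero_part F a₁ a₂ a₃),
      Fintype.card_congr (equiv_zero_part F a₁ a₂ a₃), hsplit2, hzero,
      Fintype.card_congr (equiv_cube_part F a₁ a₂ ha₁), Fintype.card_prod,
      Fintype.card_prod, hne, hcube]
  have hq1 : 1 ≤ Fintype.card F := Fintype.card_pos
  constructor
  · intro h
    rw [hM, if_pos ((cube_iff_aux F a₁ a₂ ha₁ ha₂).mp h)]
    omega
  · intro h
    rw [hM, if_neg (fun hc' => h ((cube_iff_aux F a₁ a₂ ha₁ ha₂).mpr hc'))]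
    omega
end

section
/- Let p ≡ 1 (mod 3) be prime and let χ' be a multiplicative character of F_p of order 3. Then the Jacobi sum J(χ',χ') satisfies |J(χ',χ')|² = p, J(χ',χ') + conj(J(χ',χ')) ≡ 1 mod 3 (as an integer c with J(χ',χ') = (c + 3√3 d i)/2 for integers c,d with 4p = c² + 27d² and c ≡ 1 mod 3). -/
/-! Conjugating a Jacobi sum inverts both characters, so Mathlib's identity
`J(χ,φ) J(χ⁻¹,φ⁻¹) = #F` gives `|J(χ',χ')|² = p`. Mathlib also gives the congruence
`J(χ',χ') = -1 + z (ω - 1)²` with `z ∈ ℤ[ω]`, `ω = (-1 + √3 i)/2`; since `(ω - 1)² = -3ω`,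
writing `z = e + fω` puts `J` in the form `(c + 3√3 d i)/2` with `c = 3e + 3f - 2`, and
`4|J|² = c² + 27d²`. -/

open Complex ComplexConjugate

lemma jacobiSum_conj {R : Type*} [CommRing R] [Fintype R] [Finite Rˣ] (χ ψ : MulChar R ℂ) :
    conj (jacobiSum χ ψ) = jacobiSum χ⁻¹ ψ⁻¹ := by
  rw [← MulChar.star_eq_inv, ← MulChar.star_eq_inv]
  exact (jacobiSum_ringHomComp χ ψ (starRingEnd ℂ)).symm

lemma norm_jacobiSum_sq {F : Type*} [Field F] [Fintype F] [DecidableEq F] {χ φ : MulChar F ℂ}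
    (hχ : χ ≠ 1) (hφ : φ ≠ 1) (hχφ : χ * φ ≠ 1) :
    ‖jacobiSum χ φ‖ ^ 2 = Fintype.card F := by
  have hchar : ringChar ℂ ≠ ringChar F := by
    rw [ringChar.eq_zero]
    exact (CharP.char_is_prime F (ringChar F)).ne_zero.symm
  have h := jacobiSum_mul_jacobiSum_inv hchar hχ hφ hχφ
  rw [← jacobiSum_conj, mul_conj, ← ofReal_natCast] at h
  rw [Complex.sq_norm]
  exact_mod_cast h

lemma norm_sq_half_add_sqrt_three_mul_I (c d : ℝ) :
    ‖((c : ℂ) + 3 * Real.sqrt 3 * d * I) / 2‖ ^ 2 = (c ^ 2 + 27 * d ^ 2) / 4 := by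
  have h3 : Real.sqrt 3 ^ 2 = 3 := Real.sq_sqrt (by norm_num)
  rw [Complex.sq_norm, normSq_apply]
  simp only [div_ofNat_re, add_re, ofReal_re, mul_re, re_ofNat, im_ofNat, ofReal_im, mul_zero,
    sub_zero, mul_im, zero_mul, add_zero, I_re, I_im, mul_one, sub_self, div_ofNat_im, add_im,
    zero_add]
  linear_combination (9 * d ^ 2 / 4) * h3

noncomputable def omega3 : ℂ := (-1 + Real.sqrt 3 * I) / 2

lemma omega3_sq : omega3 ^ 2 = -1 - omega3 := by
  have h3 : (Real.sqrt 3 : ℂ) ^ 2 = 3 := by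
    exact_mod_cast Real.sq_sqrt (by norm_num : (0 : ℝ) ≤ 3)
  unfold omega3
  linear_combination (I ^ 2 / 4) * h3 + (3 / 4) * I_sq

lemma isPrimitiveRoot_omega3 : IsPrimitiveRoot omega3 3 := by
  refine IsPrimitiveRoot.iff_orderOf.mpr <| orderOf_eq_prime ?_ fun h ↦ ?_
  · linear_combination (omega3 - 1) * omega3_sq
  · have h2 := omega3_sq
    rw [h] at h2
    norm_num at h2

lemma exists_int_eq_of_mem_adjoin_omega3 {x : ℂ} (hx : x ∈ Algebra.adjoin ℤ {omega3}) :
    ∃ e f : ℤ, x = e + f * omega3 := by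
  induction hx using Algebra.adjoin_induction with
  | mem y hy =>
      rw [Set.mem_singleton_iff] at hy
      exact ⟨0, 1, by simp [hy]⟩
  | algebraMap r => exact ⟨r, 0, by simp⟩
  | add y z _ _ ihy ihz =>
      obtain ⟨e, f, rfl⟩ := ihy
      obtain ⟨e', f', rfl⟩ := ihz
      exact ⟨e + e', f + f', by push_cast; ring⟩
  | mul y z _ _ ihy ihz =>
      obtain ⟨e, f, rfl⟩ := ihy
      obtain ⟨e', f', rfl⟩ := ihz
      refine ⟨e * e' - f * f', e * f' + f * e' - f * f', ?_⟩
      push_cast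
      linear_combination (f * f' : ℂ) * omega3_sq

lemma exists_half_add_sqrt_three_mul_I_of_eq_neg_one_add {x z : ℂ}
    (hz : z ∈ Algebra.adjoin ℤ {omega3}) (hx : x = -1 + z * (omega3 - 1) ^ 2) :
    ∃ c d : ℤ, x = ((c : ℂ) + 3 * Real.sqrt 3 * d * I) / 2 ∧ c % 3 = 1 := by
  obtain ⟨e, f, rfl⟩ := exists_int_eq_of_mem_adjoin_omega3 hz
  -- `(ω - 1)² = -3ω`, so `x ≡ -1` modulo `3ℤ[ω]`.
  have hx' : x = (3 * f - 1 : ℂ) + 3 * (f - e) * omega3 := by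
    rw [hx]
    linear_combination (e + f * omega3 - 3 * f) * omega3_sq
  refine ⟨3 * e + 3 * f - 2, f - e, ?_, by omega⟩
  rw [hx', omega3]
  push_cast
  ring

open Complex in
/-- For `p ≡ 1 (mod 3)` prime and `χ'` a cubic character of `F_p`, the Jacobi sum
`J(χ',χ')` has absolute value squared `p`, and `J(χ',χ') = (c + 3√3 d i)/2` for integers
`c, d` with `4p = c² + 27d²` and `c ≡ 1 (mod 3)`. -/
theorem jacobi_sum_cubic_char (p : ℕ) [Fact p.Prime] (hp : p % 3 = 1)
    (χ' : MulChar (ZMod p) ℂ) (hχ' : orderOf χ' = 3) :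
    ‖jacobiSum χ' χ'‖ ^ 2 = p ∧
      ∃ c d : ℤ, jacobiSum χ' χ' =
          ((c : ℂ) + 3 * Real.sqrt 3 * (d : ℂ) * Complex.I) / 2 ∧
        4 * (p : ℤ) = c ^ 2 + 27 * d ^ 2 ∧ c % 3 = 1 := by
  have hnorm : ‖jacobiSum χ' χ'‖ ^ 2 = p := by
    have hχ : χ' ≠ 1 := by
      simpa using pow_ne_one_of_lt_orderOf one_ne_zero (by omega : 1 < orderOf χ')
    have hχ2 : χ' * χ' ≠ 1 := by
      simpa [sq] using pow_ne_one_of_lt_orderOf two_ne_zero (by omega : 2 < orderOf χ')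
    rw [norm_jacobiSum_sq hχ hχ hχ2, ZMod.card]
  have hχ3 : χ' ^ 3 = 1 := hχ' ▸ pow_orderOf_eq_one χ'
  have hcard : 3 ∣ Fintype.card (ZMod p) - 1 := by
    rw [ZMod.card]
    omega
  obtain ⟨z, hz, hJ⟩ :=
    exists_jacobiSum_eq_neg_one_add (by norm_num) hχ3 hχ3 hcard isPrimitiveRoot_omega3
  obtain ⟨c, d, hJcd, hc⟩ := exists_half_add_sqrt_three_mul_I_of_eq_neg_one_add hz hJ
  refine ⟨hnorm, c, d, hJcd, ?_, hc⟩
  have h := norm_sq_half_add_sqrt_three_mul_I c d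
  rw [ofReal_intCast, ofReal_intCast, ← hJcd, hnorm] at h
  exact_mod_cast (by linarith : (4 * p : ℝ) = c ^ 2 + 27 * d ^ 2)
end
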